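/- For an irreducible recurrent Markov chain on a countable set V with stationary vector pi (pi p = pi, pi > 0), distinct vertices b,c, hitting function h = h_{b,c}, and escape probabilities e_{b,c} = P_b(T_c < T_b^+), suppose K_3 := 1 + (1/2)( d(b)+d(c) + sum_{u,v} d(u)p(u,v)|h(u)-h(v)| ) is finite. Then for any rotor walk and all t, | n_t(b)/pi(b) - n_t(c)/pi(c) | <= K_3/(pi(b) e_{b,c}). -/

import Mathlib

open scoped BigOperators Classical

/-- `(x, r)` is a rotor walk for the rotor mechanism `(d, succ)`.  Rotor values are
`0`-based: rotor value `j` at `u` means the rotor points to `succ u j`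
(corresponding to `u^(j+1)` in `1`-based notation).  At each step the rotor at the
current particle position is incremented cyclically and the particle moves in the
new rotor direction. -/
def IsRotorWalk {V : Type*} (d : V → ℕ) (succ : V → ℕ → V)
    (x : ℕ → V) (r : ℕ → V → ℕ) : Prop :=
  (∀ v, r 0 v < d v) ∧
  (∀ t, r (t + 1) (x t) = (r t (x t) + 1) % d (x t)) ∧
  (∀ t v, v ≠ x t → r (t + 1) v = r t v) ∧
  (∀ t, x (t + 1) = succ (x t) (r (t + 1) (x t)))

/-- the number of visits of the walk `x` to `v` strictly before time `t` -/
noncomputable def nvisits {V : Type*} (x : ℕ → V) (t : ℕ) (v : V) : ℕ :=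
  ((Finset.range t).filter fun s => x s = v).card

/-- the rotor mechanism `(d, succ)` realizes the transition kernel `p`:
`p u v` is the proportion of the `d u` successors of `u` equal to `v` -/
def Realizes {V : Type*} (d : V → ℕ) (succ : V → ℕ → V) (p : V → V → ℝ) : Prop :=
  (∀ u, 0 < d u) ∧
  ∀ u v, p u v = ((Finset.range (d u)).filter fun i => succ u i = v).card / d u

/-- `hitAux p b c t v` is the probability, for the Markov chain with kernel `p`
started at `v`, of hitting `b` before hitting `c` and within `t` steps. -/
noncomputable def hitAux {V : Type*} (p : V → V → ℝ) (b c : V) : ℕ → V → ℝ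
  | 0, v => if v = b then 1 else 0
  | t + 1, v => if v = b then 1 else if v = c then 0 else ∑' w, p v w * hitAux p b c t w

/-- the hitting probability `h_{b,c}(v) = P_v(T_b < T_c)`, as the monotone limit of the
probabilities of hitting `b` before `c` within `t` steps.  (Taking `b = c` gives the
single-target hitting probability `P_v(T_b < ∞)`.) -/
noncomputable def hitProb {V : Type*} (p : V → V → ℝ) (b c : V) (v : V) : ℝ :=
  ⨆ t, hitAux p b c t v

/-- the escape probability `e_{u,v} = P_u(T_v < T_u^+)`: a first step from `u` to `w`,
then hit `v` before `u`. -/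
noncomputable def escProb {V : Type*} (p : V → V → ℝ) (u v : V) : ℝ :=
  ∑' w, p u w * hitProb p v u w

/-- irreducibility of the kernel: any vertex can be reached from any other by a path of
positive-probability steps -/
def IrreducibleKernel {V : Type*} (p : V → V → ℝ) : Prop :=
  ∀ u v : V, ∃ (n : ℕ) (f : ℕ → V), f 0 = u ∧ f n = v ∧ ∀ i < n, 0 < p (f i) (f (i + 1))

/-- recurrence: `P_v(T_v^+ < ∞) = 1` for every `v` -/
def RecurrentKernel {V : Type*} (p : V → V → ℝ) : Prop :=
  ∀ v : V, ∑' w, p v w * hitProb p v v w = 1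


/-!
Write `h = h_{b,c}` and `Ph(u) = ∑_w p(u,w) h(w)`. Along a rotor walk, `h(x_t) - h(x_0)`
telescopes into the increments `h(u^i) - h(u)` taken in rotor order at each vertex `u`. Since a
full turn of the rotor at `u` realizes `p(u, ·)`, these increments differ from the drift
`n_t(u) (Ph(u) - h(u))` by a partial sum of a cyclic zero-sum sequence, which is at most half its
`ℓ¹` norm. The drift vanishes off `{b, c}` by harmonicity, and by recurrence
(`h_{b,c} + h_{c,b} = 1`) it is `-n_t(b) e_{b,c}` at `b` and `n_t(c) e_{c,b}` at `c`; this bounds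
`|n_t(b) e_{b,c} - n_t(c) e_{c,b}|` by `K₃`.

The flux identity `π(b) e_{b,c} = π(c) e_{c,b}` converts this into the claim. Integrating the
one-step recursion of the truncated hitting probabilities against the stationary `π` telescopes,
with partial sums bounded below by `-π(b)`; by Cesàro the limit `π(b) e_{b,c} - π(c) e_{c,b}` of
the summands is nonnegative, and the same with `b, c` swapped.
-/

open Finset Filter Topology

namespace Realizes

variable {V : Type*} {d : V → ℕ} {succ : V → ℕ → V} {p : V → V → ℝ}

lemma nonneg (hreal : Realizes d succ p) (u v : V) : 0 ≤ p u v := by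
  rw [hreal.2]; positivity

lemma eq_zero_of_notMem_image (hreal : Realizes d succ p) {u v : V}
    (hv : v ∉ (range (d u)).image (succ u)) : p u v = 0 := by
  rw [hreal.2,
    filter_false_of_mem fun i hi (hiv : succ u i = v) => hv (hiv ▸ mem_image_of_mem _ hi)]
  simp

lemma summable_mul (hreal : Realizes d succ p) (u : V) (f : V → ℝ) :
    Summable fun v => p u v * f v :=
  summable_of_ne_finset_zero fun v hv => by rw [hreal.eq_zero_of_notMem_image hv, zero_mul]

lemma tsum_mul (hreal : Realizes d succ p) (u : V) (f : V → ℝ) :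
    ∑' v, p u v * f v = (∑ i ∈ range (d u), f (succ u i)) / d u := by
  rw [tsum_eq_sum fun v hv => by rw [hreal.eq_zero_of_notMem_image hv, zero_mul],
    sum_comp f (succ u), sum_div]
  refine sum_congr rfl fun v _ => ?_
  rw [hreal.2, nsmul_eq_mul, div_mul_eq_mul_div]

lemma tsum_mul_const (hreal : Realizes d succ p) (u : V) (C : ℝ) : ∑' v, p u v * C = C := by
  have hd : (d u : ℝ) ≠ 0 := by exact_mod_cast (hreal.1 u).ne'
  rw [hreal.tsum_mul, sum_const, card_range, nsmul_eq_mul, mul_div_cancel_left₀ _ hd]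

lemma tsum_mul_add (hreal : Realizes d succ p) (u : V) (f g : V → ℝ) :
    ∑' v, p u v * (f v + g v) = ∑' v, p u v * f v + ∑' v, p u v * g v := by
  simp_rw [mul_add]
  exact (hreal.summable_mul u f).tsum_add (hreal.summable_mul u g)

lemma tsum_mul_mono (hreal : Realizes d succ p) (u : V) {f g : V → ℝ}
    (hfg : ∀ v, f v ≤ g v) :
    ∑' v, p u v * f v ≤ ∑' v, p u v * g v :=
  (hreal.summable_mul u f).tsum_le_tsum
    (fun v => mul_le_mul_of_nonneg_left (hfg v) (hreal.nonneg u v)) (hreal.summable_mul u g)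

lemma tsum_mul_le (hreal : Realizes d succ p) (u : V) {f : V → ℝ} {C : ℝ}
    (hf : ∀ v, f v ≤ C) :
    ∑' v, p u v * f v ≤ C :=
  (hreal.tsum_mul_mono u hf).trans_eq (hreal.tsum_mul_const u C)

lemma le_tsum_mul (hreal : Realizes d succ p) (u : V) {f : V → ℝ} {C : ℝ}
    (hf : ∀ v, C ≤ f v) :
    C ≤ ∑' v, p u v * f v :=
  (hreal.tsum_mul_const u C).symm.trans_le (hreal.tsum_mul_mono u hf)

lemma tsum_mul_pos (hreal : Realizes d succ p) {u w : V} {f : V → ℝ} (hf : ∀ v, 0 ≤ f v)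
    (hw : 0 < p u w) (hfw : 0 < f w) : 0 < ∑' v, p u v * f v :=
  (hreal.summable_mul u f).tsum_pos (fun v => mul_nonneg (hreal.nonneg u v) (hf v)) w
    (mul_pos hw hfw)

lemma eq_one_of_tsum_mul_eq_one (hreal : Realizes d succ p) {u w : V} {f : V → ℝ}
    (havg : ∑' v, p u v * f v = 1) (hf : ∀ v, f v ≤ 1) (hw : 0 < p u w) : f w = 1 := by
  by_contra hne
  have hlt : ∑' v, p u v * f v < ∑' v, p u v * 1 :=
    (hreal.summable_mul u f).tsum_lt_tsum
      (fun v => mul_le_mul_of_nonneg_left (hf v) (hreal.nonneg u v))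
      (mul_lt_mul_of_pos_left (lt_of_le_of_ne (hf w) hne) hw) (hreal.summable_mul u _)
  rw [havg, hreal.tsum_mul_const] at hlt
  exact hlt.false

lemma tendsto_tsum_mul (hreal : Realizes d succ p) (u : V) {f : ℕ → V → ℝ} {g : V → ℝ}
    (hfg : ∀ v, Tendsto (fun n => f n v) atTop (𝓝 (g v))) :
    Tendsto (fun n => ∑' v, p u v * f n v) atTop (𝓝 (∑' v, p u v * g v)) := by
  simp only [hreal.tsum_mul]
  exact (tendsto_finsetSum _ fun i _ => hfg _).div_const _

end Realizes

section HittingProbability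

variable {V : Type*} {d : V → ℕ} {succ : V → ℕ → V} {p : V → V → ℝ} {b c : V}

@[simp]
lemma hitAux_left (t : ℕ) : hitAux p b c t b = 1 := by
  cases t <;> simp [hitAux]

lemma hitAux_right (hcb : c ≠ b) (t : ℕ) : hitAux p b c t c = 0 := by
  cases t <;> simp [hitAux, hcb]

lemma hitAux_succ_of_ne {v : V} (hvb : v ≠ b) (hvc : v ≠ c) (t : ℕ) :
    hitAux p b c (t + 1) v = ∑' w, p v w * hitAux p b c t w := by
  simp [hitAux, hvb, hvc]

lemma hitAux_nonneg (hreal : Realizes d succ p) (t : ℕ) (v : V) : 0 ≤ hitAux p b c t v := by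
  induction t generalizing v with
  | zero => simp only [hitAux]; split_ifs <;> norm_num
  | succ t ih =>
    simp only [hitAux]
    split_ifs
    · norm_num
    · norm_num
    · exact hreal.le_tsum_mul v ih

lemma hitAux_le_one (hreal : Realizes d succ p) (t : ℕ) (v : V) : hitAux p b c t v ≤ 1 := by
  induction t generalizing v with
  | zero => simp only [hitAux]; split_ifs <;> norm_num
  | succ t ih =>
    simp only [hitAux]
    split_ifs
    · norm_num
    · norm_num
    · exact hreal.tsum_mul_le v ih

lemma hitAux_le_hitAux_succ (hreal : Realizes d succ p) (t : ℕ) (v : V) :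
    hitAux p b c t v ≤ hitAux p b c (t + 1) v := by
  induction t generalizing v with
  | zero =>
    rw [hitAux.eq_1, hitAux.eq_2]
    split_ifs
    · norm_num
    · norm_num
    · exact hreal.le_tsum_mul v (hitAux_nonneg hreal 0)
  | succ t ih =>
    rcases eq_or_ne v b with rfl | hvb
    · simp
    rcases eq_or_ne v c with rfl | hvc
    · simp [hitAux_right hvb]
    rw [hitAux_succ_of_ne hvb hvc, hitAux_succ_of_ne hvb hvc]
    exact hreal.tsum_mul_mono v ih

lemma bddAbove_range_hitAux (hreal : Realizes d succ p) (v : V) :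
    BddAbove (Set.range fun t => hitAux p b c t v) :=
  ⟨1, Set.forall_mem_range.2 fun t => hitAux_le_one hreal t v⟩

lemma tendsto_hitAux (hreal : Realizes d succ p) (v : V) :
    Tendsto (fun t => hitAux p b c t v) atTop (𝓝 (hitProb p b c v)) :=
  tendsto_atTop_ciSup (monotone_nat_of_le_succ fun t => hitAux_le_hitAux_succ hreal t v)
    (bddAbove_range_hitAux hreal v)

lemma hitAux_le_hitProb (hreal : Realizes d succ p) (t : ℕ) (v : V) :
    hitAux p b c t v ≤ hitProb p b c v :=
  le_ciSup (bddAbove_range_hitAux hreal v) t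

lemma hitProb_nonneg (hreal : Realizes d succ p) (v : V) : 0 ≤ hitProb p b c v :=
  (hitAux_nonneg hreal 0 v).trans (hitAux_le_hitProb hreal 0 v)

lemma hitProb_le_one (hreal : Realizes d succ p) (v : V) : hitProb p b c v ≤ 1 :=
  ciSup_le fun t => hitAux_le_one hreal t v

@[simp]
lemma hitProb_left : hitProb p b c b = 1 := by
  simp [hitProb]

lemma hitProb_right (hcb : c ≠ b) : hitProb p b c c = 0 := by
  simp [hitProb, hitAux_right hcb]

lemma hitProb_eq_tsum_of_ne (hreal : Realizes d succ p) {v : V} (hvb : v ≠ b) (hvc : v ≠ c) :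
    hitProb p b c v = ∑' w, p v w * hitProb p b c w := by
  refine tendsto_nhds_unique ((tendsto_hitAux hreal v).comp (tendsto_add_atTop_nat 1)) ?_
  simp only [Function.comp_def, hitAux_succ_of_ne hvb hvc]
  exact hreal.tendsto_tsum_mul v (tendsto_hitAux hreal)

end HittingProbability

section Escape

variable {V : Type*} {d : V → ℕ} {succ : V → ℕ → V} {p : V → V → ℝ} {b c : V}

lemma hitProb_self_eq_one (hreal : Realizes d succ p) (hirr : IrreducibleKernel p)
    (hrec : RecurrentKernel p) (b v : V) : hitProb p b b v = 1 := by
  have hstep : ∀ u w, hitProb p b b u = 1 → 0 < p u w → hitProb p b b w = 1 := by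
    intro u w hu hw
    have havg : ∑' w', p u w' * hitProb p b b w' = 1 := by
      rcases eq_or_ne u b with rfl | hub
      · exact hrec u
      · rw [← hitProb_eq_tsum_of_ne hreal hub hub, hu]
    exact hreal.eq_one_of_tsum_mul_eq_one havg (hitProb_le_one hreal) hw
  obtain ⟨n, f, rfl, rfl, hf⟩ := hirr b v
  have : ∀ i ≤ n, hitProb p (f 0) (f 0) (f i) = 1 := by
    intro i hi
    induction i with
    | zero => exact hitProb_left
    | succ i ih => exact hstep _ _ (ih (by omega)) (hf i (by omega))
  exact this n le_rfl

lemma hitAux_self_le_add_swap (hreal : Realizes d succ p) (hbc : b ≠ c) (t : ℕ) (v : V) :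
    hitAux p b b t v ≤ hitAux p b c t v + hitAux p c b t v := by
  induction t generalizing v with
  | zero => simp only [hitAux]; split_ifs <;> norm_num
  | succ t ih =>
    rcases eq_or_ne v b with rfl | hvb
    · simp [hitAux_right hbc]
    rcases eq_or_ne v c with rfl | hvc
    · simpa [hitAux_right hvb] using hitAux_le_one hreal _ _
    rw [hitAux_succ_of_ne hvb hvb, hitAux_succ_of_ne hvb hvc, hitAux_succ_of_ne hvc hvb,
      ← hreal.tsum_mul_add]
    exact hreal.tsum_mul_mono v ih

lemma hitAux_add_swap_le_one (hreal : Realizes d succ p) (hbc : b ≠ c) (t : ℕ) (v : V) :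
    hitAux p b c t v + hitAux p c b t v ≤ 1 := by
  induction t generalizing v with
  | zero =>
    simp only [hitAux]
    split_ifs with hvb hvc
    · exact absurd (hvb.symm.trans hvc) hbc
    all_goals norm_num
  | succ t ih =>
    rcases eq_or_ne v b with rfl | hvb
    · simp [hitAux_right hbc]
    rcases eq_or_ne v c with rfl | hvc
    · simp [hitAux_right hvb]
    rw [hitAux_succ_of_ne hvb hvc, hitAux_succ_of_ne hvc hvb, ← hreal.tsum_mul_add]
    exact hreal.tsum_mul_le v ih

lemma hitProb_add_swap (hreal : Realizes d succ p) (hirr : IrreducibleKernel p)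
    (hrec : RecurrentKernel p) (hbc : b ≠ c) (v : V) :
    hitProb p b c v + hitProb p c b v = 1 := by
  refine le_antisymm ?_ ?_
  · exact le_of_tendsto ((tendsto_hitAux hreal v).add (tendsto_hitAux hreal v))
      (Eventually.of_forall fun t => hitAux_add_swap_le_one hreal hbc t v)
  · rw [← hitProb_self_eq_one hreal hirr hrec b v]
    exact ciSup_le fun t => (hitAux_self_le_add_swap hreal hbc t v).trans
      (add_le_add (hitAux_le_hitProb hreal t v) (hitAux_le_hitProb hreal t v))

lemma escProb_eq_one_sub (hreal : Realizes d succ p) (hirr : IrreducibleKernel p)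
    (hrec : RecurrentKernel p) (hbc : b ≠ c) :
    escProb p b c = 1 - ∑' w, p b w * hitProb p b c w := by
  have h := hreal.tsum_mul_add b (hitProb p b c) (hitProb p c b)
  simp only [hitProb_add_swap hreal hirr hrec hbc, hreal.tsum_mul_const] at h
  rw [escProb]
  linarith

lemma escProb_pos (hreal : Realizes d succ p) (hirr : IrreducibleKernel p) (hbc : b ≠ c) :
    0 < escProb p b c := by
  -- Backwards along a positive path to `c`, each vertex escapes to `c` before `b` with positive
  -- probability; the induction can only break at a visit to `b`, where it gives `e_{b,c} > 0`.
  have key : ∀ (n : ℕ) (g : ℕ → V), g (n + 1) = c →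
      (∀ i < n + 1, 0 < p (g i) (g (i + 1))) →
      0 < ∑' w, p (g 0) w * hitProb p c b w ∨ 0 < escProb p b c := by
    intro n
    induction n with
    | zero =>
      intro g hg hpos
      exact Or.inl (hreal.tsum_mul_pos (hitProb_nonneg hreal) (hpos 0 one_pos) (by simp [hg]))
    | succ n ih =>
      intro g hg hpos
      rcases ih (fun i => g (i + 1)) hg (fun i hi => hpos (i + 1) (by omega)) with hg1 | hesc
      · rcases eq_or_ne (g 1) b with hb | hb
        · exact Or.inr (hb ▸ hg1)
        refine Or.inl (hreal.tsum_mul_pos (hitProb_nonneg hreal) (hpos 0 (by omega)) ?_)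
        rcases eq_or_ne (g 1) c with hc | hc
        · simp [hc]
        · rwa [hitProb_eq_tsum_of_ne hreal hc hb]
      · exact Or.inr hesc
  obtain ⟨n, g, hg0, hgn, hpos⟩ := hirr b c
  cases n with
  | zero => exact absurd (hg0.symm.trans hgn) hbc
  | succ n => exact (key n g hgn hpos).elim (hg0 ▸ id) id

end Escape

lemma nonneg_of_tendsto_of_bddBelow_sum_range {a : ℕ → ℝ} {L : ℝ}
    (ha : Tendsto a atTop (𝓝 L)) (hbdd : BddBelow (Set.range fun n => ∑ k ∈ range n, a k)) :
    0 ≤ L := by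
  obtain ⟨C, hC⟩ := hbdd
  have hlow (n : ℕ) : (n : ℝ)⁻¹ * C ≤ (n : ℝ)⁻¹ * ∑ k ∈ range n, a k :=
    mul_le_mul_of_nonneg_left (hC (Set.mem_range_self n)) (by positivity)
  have hzero : Tendsto (fun n : ℕ => (n : ℝ)⁻¹ * C) atTop (𝓝 0) := by
    simpa using tendsto_inv_atTop_nhds_zero_nat.mul_const C
  exact le_of_tendsto_of_tendsto hzero ha.cesaro (Eventually.of_forall hlow)

section Flux

variable {V : Type*} {d : V → ℕ} {succ : V → ℕ → V} {p : V → V → ℝ} {π : V → ℝ}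
  {b c : V}

lemma tsum_ofReal_mul_tsum_mul (hreal : Realizes d succ p) (hπ0 : ∀ v, 0 ≤ π v)
    (hπ : ∀ v, HasSum (fun u => π u * p u v) (π v)) {f : V → ℝ} (hf : ∀ v, 0 ≤ f v) :
    ∑' u, ENNReal.ofReal (π u * ∑' v, p u v * f v) = ∑' v, ENNReal.ofReal (π v * f v) := by
  have hterm : ∀ u v, 0 ≤ π u * p u v * f v := fun u v =>
    mul_nonneg (mul_nonneg (hπ0 u) (hreal.nonneg u v)) (hf v)
  calc ∑' u, ENNReal.ofReal (π u * ∑' v, p u v * f v)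
      = ∑' u, ∑' v, ENNReal.ofReal (π u * p u v * f v) := by
        refine tsum_congr fun u => ?_
        rw [← tsum_mul_left, ENNReal.ofReal_tsum_of_nonneg (fun v => ?_)
          ((hreal.summable_mul u f).mul_left _)]
        · simp_rw [mul_assoc]
        · rw [← mul_assoc]; exact hterm u v
    _ = ∑' v, ∑' u, ENNReal.ofReal (π u * p u v * f v) := ENNReal.tsum_comm
    _ = ∑' v, ENNReal.ofReal (π v * f v) := by
        refine tsum_congr fun v => ?_
        rw [← ENNReal.ofReal_tsum_of_nonneg (fun u => hterm u v) ((hπ v).summable.mul_right _),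
          tsum_mul_right, (hπ v).tsum_eq]

-- Valued in `ℝ≥0∞`: finiteness only follows from the recursion `hitMass_succ_add`.
noncomputable def hitMass (π : V → ℝ) (p : V → V → ℝ) (b c : V) (n : ℕ) : ENNReal :=
  ∑' v, ENNReal.ofReal (π v * hitAux p b c n v)

lemma hitMass_zero (π : V → ℝ) (p : V → V → ℝ) (b c : V) :
    hitMass π p b c 0 = ENNReal.ofReal (π b) := by
  simp only [hitMass, hitAux, mul_ite, mul_one, mul_zero, apply_ite ENNReal.ofReal,
    ENNReal.ofReal_zero]
  exact tsum_ite_eq b _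

lemma hitMass_succ_add (hreal : Realizes d succ p) (hπ0 : ∀ v, 0 ≤ π v)
    (hπ : ∀ v, HasSum (fun u => π u * p u v) (π v)) (hbc : b ≠ c) (n : ℕ) :
    hitMass π p b c (n + 1) + ENNReal.ofReal (π c * ∑' w, p c w * hitAux p b c n w) =
      ENNReal.ofReal (π b * (1 - ∑' w, p b w * hitAux p b c n w)) + hitMass π p b c n := by
  set S : V → ℝ := fun v => ∑' w, p v w * hitAux p b c n w
  have hS0 : ∀ v, 0 ≤ S v := fun v => hreal.le_tsum_mul v (hitAux_nonneg hreal n)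
  have hS1 : ∀ v, S v ≤ 1 := fun v => hreal.tsum_mul_le v (hitAux_le_one hreal n)
  have hpoint : ∀ v, ENNReal.ofReal (π v * hitAux p b c (n + 1) v) +
      (if v = c then ENNReal.ofReal (π c * S c) else 0) =
      (if v = b then ENNReal.ofReal (π b * (1 - S b)) else 0) + ENNReal.ofReal (π v * S v) := by
    intro v
    rcases eq_or_ne v b with rfl | hvb
    · rw [hitAux_left, if_neg hbc, if_pos rfl, add_zero,
        ← ENNReal.ofReal_add (mul_nonneg (hπ0 v) (by linarith [hS1 v]))
          (mul_nonneg (hπ0 v) (hS0 v))]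
      ring_nf
    rcases eq_or_ne v c with rfl | hvc
    · simp [hitAux_right hvb, hvb]
    · rw [hitAux_succ_of_ne hvb hvc, if_neg hvc, if_neg hvb, add_zero, zero_add]
  rw [hitMass, hitMass, ← tsum_ofReal_mul_tsum_mul hreal hπ0 hπ (hitAux_nonneg hreal n),
    ← tsum_ite_eq c (fun _ => ENNReal.ofReal (π c * S c)),
    ← tsum_ite_eq b (fun _ => ENNReal.ofReal (π b * (1 - S b))),
    ← ENNReal.tsum_add, ← ENNReal.tsum_add]
  exact tsum_congr hpoint

lemma hitMass_ne_top (hreal : Realizes d succ p) (hπ0 : ∀ v, 0 ≤ π v)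
    (hπ : ∀ v, HasSum (fun u => π u * p u v) (π v)) (hbc : b ≠ c) (n : ℕ) :
    hitMass π p b c n ≠ ⊤ := by
  induction n with
  | zero => simp [hitMass_zero]
  | succ n ih =>
    refine ne_top_of_le_ne_top ?_ (le_self_add.trans (hitMass_succ_add hreal hπ0 hπ hbc n).le)
    exact ENNReal.add_ne_top.2 ⟨ENNReal.ofReal_ne_top, ih⟩

lemma hitMass_toReal_succ_add (hreal : Realizes d succ p) (hπ0 : ∀ v, 0 ≤ π v)
    (hπ : ∀ v, HasSum (fun u => π u * p u v) (π v)) (hbc : b ≠ c) (n : ℕ) :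
    (hitMass π p b c (n + 1)).toReal + π c * ∑' w, p c w * hitAux p b c n w =
      π b * (1 - ∑' w, p b w * hitAux p b c n w) + (hitMass π p b c n).toReal := by
  have h := congrArg ENNReal.toReal (hitMass_succ_add hreal hπ0 hπ hbc n)
  rwa [ENNReal.toReal_add (hitMass_ne_top hreal hπ0 hπ hbc _) ENNReal.ofReal_ne_top,
    ENNReal.toReal_add ENNReal.ofReal_ne_top (hitMass_ne_top hreal hπ0 hπ hbc _),
    ENNReal.toReal_ofReal (mul_nonneg (hπ0 c) (hreal.le_tsum_mul c (hitAux_nonneg hreal n))),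
    ENNReal.toReal_ofReal (mul_nonneg (hπ0 b)
      (sub_nonneg.2 (hreal.tsum_mul_le b (hitAux_le_one hreal n))))] at h

lemma mul_escProb_swap_le (hreal : Realizes d succ p) (hirr : IrreducibleKernel p)
    (hrec : RecurrentKernel p) (hπ0 : ∀ v, 0 ≤ π v)
    (hπ : ∀ v, HasSum (fun u => π u * p u v) (π v)) (hbc : b ≠ c) :
    π c * escProb p c b ≤ π b * escProb p b c := by
  set a : ℕ → ℝ := fun n =>
    π b * (1 - ∑' w, p b w * hitAux p b c n w) - π c * ∑' w, p c w * hitAux p b c n w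
  have hlim : Tendsto a atTop (𝓝 (π b * escProb p b c - π c * escProb p c b)) := by
    rw [escProb_eq_one_sub hreal hirr hrec hbc, escProb]
    exact (tendsto_const_nhds.mul (tendsto_const_nhds.sub
      (hreal.tendsto_tsum_mul b (tendsto_hitAux hreal)))).sub
      (tendsto_const_nhds.mul (hreal.tendsto_tsum_mul c (tendsto_hitAux hreal)))
  have hbdd : BddBelow (Set.range fun n => ∑ k ∈ range n, a k) := by
    refine ⟨-(hitMass π p b c 0).toReal, Set.forall_mem_range.2 fun n => ?_⟩
    have ha : ∀ k, a k = (hitMass π p b c (k + 1)).toReal - (hitMass π p b c k).toReal :=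
      fun k => by linarith [hitMass_toReal_succ_add hreal hπ0 hπ hbc k]
    simp only [ha, sum_range_sub fun k => (hitMass π p b c k).toReal]
    linarith [(hitMass π p b c n).toReal_nonneg]
  linarith [nonneg_of_tendsto_of_bddBelow_sum_range hlim hbdd]

lemma mul_escProb_eq_mul_escProb_swap (hreal : Realizes d succ p) (hirr : IrreducibleKernel p)
    (hrec : RecurrentKernel p) (hπ0 : ∀ v, 0 ≤ π v)
    (hπ : ∀ v, HasSum (fun u => π u * p u v) (π v)) (hbc : b ≠ c) :
    π b * escProb p b c = π c * escProb p c b :=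
  le_antisymm (mul_escProb_swap_le hreal hirr hrec hπ0 hπ hbc.symm)
    (mul_escProb_swap_le hreal hirr hrec hπ0 hπ hbc)

end Flux

lemma Function.Periodic.sum_range_add {M : Type*} [AddCommGroup M] {f : ℕ → M} {n : ℕ}
    (hf : Function.Periodic f n) (c : ℕ) :
    ∑ j ∈ range n, f (c + j) = ∑ j ∈ range n, f j := by
  induction c with
  | zero => simp
  | succ c ih =>
    have h := (sum_range_succ' (fun j => f (c + j)) n).symm.trans
      (sum_range_succ (fun j => f (c + j)) n)
    simp only [add_zero, hf c, ← add_assoc] at h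
    rw [← ih, ← add_right_cancel h]
    exact sum_congr rfl fun j _ => by rw [add_right_comm]

lemma abs_sum_le_half_sum_abs_of_subset {ι : Type*} {s t : Finset ι} {g : ι → ℝ}
    (hts : t ⊆ s) (hg : ∑ i ∈ s, g i = 0) :
    |∑ i ∈ t, g i| ≤ (1 / 2) * ∑ i ∈ s, |g i| := by
  have hsplit := sum_sdiff hts (f := g)
  have hsplit_abs := sum_sdiff hts (f := fun i => |g i|)
  have hcompl : |∑ i ∈ t, g i| = |∑ i ∈ s \ t, g i| := by
    rw [← abs_neg, show -∑ i ∈ t, g i = ∑ i ∈ s \ t, g i by linarith]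
  have h1 := abs_sum_le_sum_abs g t
  have h2 := abs_sum_le_sum_abs g (s \ t)
  linarith

lemma abs_sum_range_mod_le {g : ℕ → ℝ} {n : ℕ} (hn : 0 < n)
    (hg : ∑ i ∈ range n, g i = 0) (c k : ℕ) :
    |∑ j ∈ range k, g ((c + j) % n)| ≤ (1 / 2) * ∑ i ∈ range n, |g i| := by
  have hper : Function.Periodic (fun k => ∑ j ∈ range k, g ((c + j) % n)) n := fun k => by
    have hmod : Function.Periodic (fun j => g (j % n)) n := fun j => by simp
    have hcycle : ∑ j ∈ range n, g (j % n) = 0 := by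
      rw [← hg]; exact sum_congr rfl fun j hj => by rw [Nat.mod_eq_of_lt (mem_range.1 hj)]
    simp only [sum_range_add, ← add_assoc, hmod.sum_range_add, hcycle, add_zero]
  rw [← hper.map_mod_nat k]
  have hinj : Set.InjOn (fun j => (c + j) % n) (range (k % n)) := fun i hi j hj hij => by
    have hk := Nat.mod_lt k hn
    simp only [coe_range, Set.mem_Iio] at hi hj
    exact (Nat.ModEq.add_left_cancel' c hij).eq_of_lt_of_lt (hi.trans hk) (hj.trans hk)
  rw [← sum_image hinj]
  exact abs_sum_le_half_sum_abs_of_subset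
    (fun i hi => by
      obtain ⟨j, -, rfl⟩ := mem_image.1 hi
      exact mem_range.2 (Nat.mod_lt _ hn)) hg

section RotorWalk

variable {V : Type*} {d : V → ℕ} {succ : V → ℕ → V} {p : V → V → ℝ} {x : ℕ → V}
  {r : ℕ → V → ℕ}

lemma nvisits_zero (x : ℕ → V) (v : V) : nvisits x 0 v = 0 := by
  simp [nvisits]

lemma nvisits_succ (x : ℕ → V) (t : ℕ) (v : V) :
    nvisits x (t + 1) v = nvisits x t v + if v = x t then 1 else 0 := by
  unfold nvisits
  rw [range_add_one, filter_insert]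
  split_ifs with h1 h2 h2
  · rw [card_insert_of_notMem (by simp)]
  · exact absurd h1.symm h2
  · exact absurd h2.symm h1
  · rfl

namespace IsRotorWalk

lemma rotor_eq (hwalk : IsRotorWalk d succ x r) (t : ℕ) (v : V) :
    r t v = (r 0 v + nvisits x t v) % d v := by
  obtain ⟨h0, hcur, hother, -⟩ := hwalk
  induction t generalizing v with
  | zero => rw [nvisits_zero, add_zero, Nat.mod_eq_of_lt (h0 v)]
  | succ t ih =>
    rcases eq_or_ne v (x t) with rfl | hv
    · rw [hcur, ih, nvisits_succ, if_pos rfl, Nat.mod_add_mod, add_assoc]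
    · rw [hother t v hv, ih, nvisits_succ, if_neg hv, add_zero]

lemma succ_eq (hwalk : IsRotorWalk d succ x r) (t : ℕ) :
    x (t + 1) = succ (x t) ((r 0 (x t) + 1 + nvisits x t (x t)) % d (x t)) := by
  rw [hwalk.2.2.2, hwalk.rotor_eq, nvisits_succ, if_pos rfl]
  congr 2
  ring

lemma telescope {M : Type*} [AddCommGroup M] (hwalk : IsRotorWalk d succ x r) (φ : V → M)
    {t : ℕ} {F : Finset V} (hF : ∀ s < t, x s ∈ F) :
    φ (x t) - φ (x 0) = ∑ u ∈ F, ∑ j ∈ range (nvisits x t u),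
      (φ (succ u ((r 0 u + 1 + j) % d u)) - φ u) := by
  induction t with
  | zero => simp [nvisits_zero]
  | succ t ih =>
    have hstep : ∀ u, ∑ j ∈ range (nvisits x (t + 1) u),
          (φ (succ u ((r 0 u + 1 + j) % d u)) - φ u)
        = ∑ j ∈ range (nvisits x t u), (φ (succ u ((r 0 u + 1 + j) % d u)) - φ u)
          + if u = x t then φ (x (t + 1)) - φ (x t) else 0 := by
      intro u
      rw [nvisits_succ]
      split_ifs with hu
      · rw [sum_range_succ, hu, hwalk.succ_eq]
      · rw [add_zero, add_zero]
    rw [sum_congr rfl fun u _ => hstep u, sum_add_distrib, sum_ite_eq',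
      if_pos (hF t t.lt_succ_self),
      ← ih fun s hs => hF s (by omega)]
    abel

lemma abs_sub_sub_sum_le (hwalk : IsRotorWalk d succ x r) (hreal : Realizes d succ p)
    (φ : V → ℝ) {t : ℕ} {F : Finset V} (hF : ∀ s < t, x s ∈ F) :
    |φ (x t) - φ (x 0) - ∑ u ∈ F, nvisits x t u * (∑' w, p u w * φ w - φ u)| ≤
      ∑ u ∈ F, (1 / 2) * ∑ i ∈ range (d u), |φ (succ u i) - ∑' w, p u w * φ w| := by
  rw [hwalk.telescope φ hF, ← sum_sub_distrib]
  refine (abs_sum_le_sum_abs _ _).trans (sum_le_sum fun u _ => ?_)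
  have hd : (d u : ℝ) ≠ 0 := by exact_mod_cast (hreal.1 u).ne'
  have hzero : ∑ i ∈ range (d u), (φ (succ u i) - ∑' w, p u w * φ w) = 0 := by
    rw [sum_sub_distrib, sum_const, card_range, nsmul_eq_mul, hreal.tsum_mul,
      mul_div_cancel₀ _ hd, sub_self]
  have hcenter : ∑ j ∈ range (nvisits x t u), (φ (succ u ((r 0 u + 1 + j) % d u)) - φ u) -
      nvisits x t u * (∑' w, p u w * φ w - φ u) = ∑ j ∈ range (nvisits x t u),
        (φ (succ u ((r 0 u + 1 + j) % d u)) - ∑' w, p u w * φ w) := by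
    simp only [sum_sub_distrib, sum_const, card_range, nsmul_eq_mul]
    ring
  rw [hcenter]
  exact abs_sum_range_mod_le (hreal.1 u) hzero (r 0 u + 1) (nvisits x t u)

end IsRotorWalk

end RotorWalk

lemma sum_tsum_le_tsum_prod {α β : Type*} {f : α × β → ℝ} (hf0 : ∀ z, 0 ≤ f z)
    (hf : Summable f) (s : Finset α) : ∑ a ∈ s, ∑' b, f (a, b) ≤ ∑' z, f z := by
  rw [hf.tsum_prod]
  exact hf.prod.sum_le_tsum s (fun a _ => tsum_nonneg fun b => hf0 _)

section Discrepancy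

variable {V : Type*} {d : V → ℕ} {succ : V → ℕ → V} {p : V → V → ℝ} {b c : V}

lemma Realizes.sum_abs_sub_tsum_le (hreal : Realizes d succ p) {φ : V → ℝ}
    (hφ0 : ∀ v, 0 ≤ φ v) (hφ1 : ∀ v, φ v ≤ 1) (u : V) :
    ∑ i ∈ range (d u), |φ (succ u i) - ∑' w, p u w * φ w| ≤ d u := by
  have hm0 := hreal.le_tsum_mul u hφ0
  have hm1 := hreal.tsum_mul_le u hφ1
  calc _ ≤ ∑ i ∈ range (d u), (1 : ℝ) := sum_le_sum fun i _ => abs_sub_le_iff.2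
        ⟨by linarith [hφ1 (succ u i)], by linarith [hφ0 (succ u i)]⟩
    _ = d u := by simp

lemma Realizes.sum_abs_sub_eq_tsum (hreal : Realizes d succ p) (φ : V → ℝ) (u : V) :
    ∑ i ∈ range (d u), |φ (succ u i) - φ u| = ∑' v, d u * p u v * |φ u - φ v| := by
  have hd : (d u : ℝ) ≠ 0 := by exact_mod_cast (hreal.1 u).ne'
  simp_rw [mul_assoc]
  rw [tsum_mul_left, hreal.tsum_mul, mul_div_cancel₀ _ hd]
  exact sum_congr rfl fun i _ => abs_sub_comm _ _

lemma IsRotorWalk.abs_nvisits_mul_escProb_sub_le {x : ℕ → V} {r : ℕ → V → ℕ}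
    (hwalk : IsRotorWalk d succ x r) (hreal : Realizes d succ p) (hirr : IrreducibleKernel p)
    (hrec : RecurrentKernel p) (hbc : b ≠ c)
    (hsum : Summable fun uv : V × V =>
      (d uv.1 : ℝ) * p uv.1 uv.2 * |hitProb p b c uv.1 - hitProb p b c uv.2|) (t : ℕ) :
    |(nvisits x t b : ℝ) * escProb p b c - nvisits x t c * escProb p c b| ≤
      1 + (1 / 2) * ((d b : ℝ) + d c + ∑' uv : V × V,
        (d uv.1 : ℝ) * p uv.1 uv.2 * |hitProb p b c uv.1 - hitProb p b c uv.2|) := by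
  set φ := hitProb p b c
  have hφ0 : ∀ v, 0 ≤ φ v := hitProb_nonneg hreal
  have hφ1 : ∀ v, φ v ≤ 1 := hitProb_le_one hreal
  set F := (range t).image x ∪ {b, c}
  have hF : ∀ s < t, x s ∈ F := fun s hs =>
    mem_union_left _ (mem_image_of_mem x (mem_range.2 hs))
  have hbcF : {b, c} ⊆ F := subset_union_right
  have hdrift : ∑ u ∈ F, nvisits x t u * (∑' w, p u w * φ w - φ u) =
      nvisits x t c * escProb p c b - nvisits x t b * escProb p b c := by
    have hescb : escProb p b c = 1 - ∑' w, p b w * φ w := escProb_eq_one_sub hreal hirr hrec hbc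
    have hescc : escProb p c b = ∑' w, p c w * φ w := rfl
    have hφb : φ b = 1 := hitProb_left
    have hφc : φ c = 0 := hitProb_right hbc.symm
    rw [← sum_subset hbcF fun u _ hu => ?_, sum_pair hbc, hescb, hescc, hφb, hφc]
    · ring
    · simp only [mem_insert, mem_singleton, not_or] at hu
      rw [← hitProb_eq_tsum_of_ne hreal hu.1 hu.2, sub_self, mul_zero]
  have herr :
      ∑ u ∈ F, (1 / 2) * ∑ i ∈ range (d u), |φ (succ u i) - ∑' w, p u w * φ w| ≤
      (1 / 2) * ((d b : ℝ) + d c +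
        ∑' uv : V × V, (d uv.1 : ℝ) * p uv.1 uv.2 * |φ uv.1 - φ uv.2|) := by
    have hrest :
        ∑ u ∈ F \ {b, c}, ∑ i ∈ range (d u), |φ (succ u i) - ∑' w, p u w * φ w| ≤
        ∑' uv : V × V, (d uv.1 : ℝ) * p uv.1 uv.2 * |φ uv.1 - φ uv.2| := by
      calc _ = ∑ u ∈ F \ {b, c}, ∑' v, (d u : ℝ) * p u v * |φ u - φ v| := by
            refine sum_congr rfl fun u hu => ?_
            simp only [Finset.mem_sdiff, mem_insert, mem_singleton, not_or] at hu
            rw [← hitProb_eq_tsum_of_ne hreal hu.2.1 hu.2.2, hreal.sum_abs_sub_eq_tsum]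
        _ ≤ _ := sum_tsum_le_tsum_prod
            (fun uv => mul_nonneg (mul_nonneg (by positivity) (hreal.nonneg _ _)) (abs_nonneg _))
            hsum _
    rw [← mul_sum, ← sum_sdiff hbcF, sum_pair hbc]
    linarith [hreal.sum_abs_sub_tsum_le hφ0 hφ1 b, hreal.sum_abs_sub_tsum_le hφ0 hφ1 c]
  have hφ : |φ (x t) - φ (x 0)| ≤ 1 := abs_sub_le_iff.2
    ⟨by linarith [hφ1 (x t), hφ0 (x 0)], by linarith [hφ1 (x 0), hφ0 (x t)]⟩
  have hmain := hwalk.abs_sub_sub_sum_le hreal φ hF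
  rw [hdrift] at hmain
  calc |(nvisits x t b : ℝ) * escProb p b c - nvisits x t c * escProb p c b|
      = |(φ (x t) - φ (x 0)) - (φ (x t) - φ (x 0) -
          (nvisits x t c * escProb p c b - nvisits x t b * escProb p b c))| := by
        rw [abs_sub_comm]; ring_nf
    _ ≤ |φ (x t) - φ (x 0)| + |φ (x t) - φ (x 0) -
          (nvisits x t c * escProb p c b - nvisits x t b * escProb p b c)| := abs_sub _ _
    _ ≤ _ := by linarith

end Discrepancy

theorem rotor_occupation_frequencies_general {V : Type*}
    (d : V → ℕ) (succ : V → ℕ → V) (p : V → V → ℝ)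
    (hreal : Realizes d succ p)
    (hirr : IrreducibleKernel p) (hrec : RecurrentKernel p)
    (π : V → ℝ) (hπpos : ∀ v, 0 < π v)
    (hπ : ∀ v, HasSum (fun u => π u * p u v) (π v))
    (b c : V) (hbc : b ≠ c)
    (h : V → ℝ) (hh : h = hitProb p b c)
    (K₃ : ℝ)
    (hsum : Summable fun uv : V × V =>
      (d uv.1 : ℝ) * p uv.1 uv.2 * |h uv.1 - h uv.2|)
    (hK₃ : K₃ = 1 + (1 / 2) * ((d b : ℝ) + (d c : ℝ) +
      ∑' uv : V × V, (d uv.1 : ℝ) * p uv.1 uv.2 * |h uv.1 - h uv.2|))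
    (x : ℕ → V) (r : ℕ → V → ℕ) (hwalk : IsRotorWalk d succ x r)
    (t : ℕ) :
    |(nvisits x t b : ℝ) / π b - (nvisits x t c : ℝ) / π c| ≤
      K₃ / (π b * escProb p b c) := by
  subst hh hK₃
  have he := escProb_pos hreal hirr hbc
  have he' := escProb_pos hreal hirr hbc.symm
  have hflux := mul_escProb_eq_mul_escProb_swap hreal hirr hrec (fun v => (hπpos v).le) hπ hbc
  have hden : 0 < π b * escProb p b c := mul_pos (hπpos b) he
  have hquot : (nvisits x t b : ℝ) / π b - nvisits x t c / π c =
      (nvisits x t b * escProb p b c - nvisits x t c * escProb p c b) / (π b * escProb p b c) := by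
    rw [sub_div, mul_div_mul_right _ _ he.ne', hflux, mul_div_mul_right _ _ he'.ne']
  rw [hquot, abs_div, abs_of_pos hden]
  exact div_le_div_of_nonneg_right
    (hwalk.abs_nvisits_mul_escProb_sub_le hreal hirr hrec hbc hsum t) hden.le

/-- **Occupation frequencies** (Theorem `stat-vec`). -/
theorem rotor_occupation_frequencies {V : Type*} [Countable V]
    (d : V → ℕ) (succ : V → ℕ → V) (p : V → V → ℝ)
    (hreal : Realizes d succ p)
    (hirr : IrreducibleKernel p) (hrec : RecurrentKernel p)
    (π : V → ℝ) (hπpos : ∀ v, 0 < π v)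
    (hπ : ∀ v, HasSum (fun u => π u * p u v) (π v))
    (b c : V) (hbc : b ≠ c)
    (h : V → ℝ) (hh : h = hitProb p b c)
    (K₃ : ℝ)
    (hsum : Summable fun uv : V × V =>
      (d uv.1 : ℝ) * p uv.1 uv.2 * |h uv.1 - h uv.2|)
    (hK₃ : K₃ = 1 + (1 / 2) * ((d b : ℝ) + (d c : ℝ) +
      ∑' uv : V × V, (d uv.1 : ℝ) * p uv.1 uv.2 * |h uv.1 - h uv.2|))
    (x : ℕ → V) (r : ℕ → V → ℕ) (hwalk : IsRotorWalk d succ x r)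
    (t : ℕ) :
    |(nvisits x t b : ℝ) / π b - (nvisits x t c : ℝ) / π c| ≤
      K₃ / (π b * escProb p b c) :=
  rotor_occupation_frequencies_general d succ p hreal hirr hrec π hπpos hπ b c hbc h hh K₃ hsum hK₃
    x r hwalk t
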